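/- arXiv:2312.11957 — 6 statements merged into one kernel-verified Lean document; each statement's English description precedes it below -/
import Mathlib

section
/- Let G be a finite group of order ℓ, let 2 ≤ q ≤ ℓ, let X be a free G-space and let Y be a Hausdorff topological space. The triple (X,G;Y) does NOT satisfy the q-th Borsuk-Ulam property if and only if there exists a continuous G-equivariant map X → Map_q(G,Y). -/
/-- `Map_q(G,Y)`: functions `G → Y` that are non-constant on every `q`-element subset of `G`. -/
def MapQ (G Y : Type*) (q : ℕ) : Set (G → Y) :=
  {φ | ∀ S : Finset G, S.card = q → ¬∃ y : Y, ∀ g ∈ S, φ g = y}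

theorem MapQ.smul_mem {G Y : Type*} [Group G] {q : ℕ} (g : G) {φ : G → Y}
    (hφ : φ ∈ MapQ G Y q) : (fun h => φ (g⁻¹ * h)) ∈ MapQ G Y q := by
  classical
  rintro S hS ⟨y, hy⟩
  refine hφ (S.image (fun h => g⁻¹ * h)) ?_ ⟨y, ?_⟩
  · rwa [Finset.card_image_of_injective _ (mul_right_injective g⁻¹)]
  · rintro a ha
    obtain ⟨b, hb, rfl⟩ := Finset.mem_image.mp ha
    exact hy b hb

/-- The left `G`-action on `Map_q(G,Y)` given by `(g • φ) h = φ (g⁻¹ * h)`. -/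
instance MapQ.instSMul {G Y : Type*} [Group G] {q : ℕ} : SMul G (MapQ G Y q) :=
  ⟨fun g φ => ⟨fun h => (φ : G → Y) (g⁻¹ * h), MapQ.smul_mem g φ.2⟩⟩

instance MapQ.instMulAction {G Y : Type*} [Group G] {q : ℕ} :
    MulAction G (MapQ G Y q) where
  one_smul φ := Subtype.ext <| funext fun h => by
    show (φ : G → Y) ((1 : G)⁻¹ * h) = (φ : G → Y) h
    rw [inv_one, one_mul]
  mul_smul g k φ := Subtype.ext <| funext fun h => by
    show (φ : G → Y) ((g * k)⁻¹ * h) = (φ : G → Y) (k⁻¹ * (g⁻¹ * h))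
    rw [mul_inv_rev, mul_assoc]

/-- The sectional category of a map: the least `n` such that the base admits a cover by `n`
open sets, each admitting a continuous local section; `∞` if no such finite cover exists. -/
noncomputable def secat {E B : Type*} [TopologicalSpace E] [TopologicalSpace B]
    (p : E → B) : ℕ∞ :=
  ⨅ (n : ℕ) (_ : ∃ U : Fin n → Set B, (∀ i, IsOpen (U i)) ∧ (⋃ i, U i) = Set.univ ∧
      ∀ i, ∃ s : C(U i, E), ∀ b : U i, p (s b) = (b : B)), (n : ℕ∞)

/-- The triple `(X,G;Y)` satisfies the `q`-th Borsuk-Ulam property. -/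
def BorsukUlam (G : Type*) [Group G] (X Y : Type*) [TopologicalSpace X] [TopologicalSpace Y]
    [MulAction G X] (q : ℕ) : Prop :=
  ∀ f : C(X, Y), ∃ (x : X) (S : Finset G), S.card = q ∧ ∃ y : Y, ∀ g ∈ S, f (g • x) = y

/-- The `q`-th index of `(X,G)`: the least `k` such that there is a continuous `G`-equivariant
map `X → Map_q(G, ℝ^{k+1})`; `∞` if no such `k` exists. -/
noncomputable def indexQ (G : Type*) [Group G] (X : Type*) [TopologicalSpace X]
    [MulAction G X] (q : ℕ) : ℕ∞ :=
  ⨅ (k : ℕ) (_ : ∃ Φ : C(X, MapQ G (Fin (k + 1) → ℝ) q),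
      ∀ (g : G) (x : X), Φ (g • x) = g • Φ x), (k : ℕ∞)

/-! The `G`-orbit of a point `x` under a map `f : X → Y`, read as the function `h ↦ f (h⁻¹ • x)`
on `G`, lies in `Map_q(G,Y)` exactly when no `q` points of the orbit share an image. Every
equivariant map `Φ : X → Map_q(G,Y)` is of this form, with `f` the evaluation of `Φ` at `1`,
so both sides of the equivalence amount to a continuous `f` with no `q`-fold orbit
coincidence. -/

open Pointwise

section OrbitMap

variable {G X Y : Type*} [Group G] [MulAction G X]

theorem MapQ.smul_apply {q : ℕ} (g : G) (φ : MapQ G Y q) (h : G) :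
    ((g • φ : MapQ G Y q) : G → Y) h = (φ : G → Y) (g⁻¹ * h) :=
  rfl

def orbitMap (f : X → Y) (x : X) : G → Y := fun h => f (h⁻¹ • x)

theorem orbitMap_smul (f : X → Y) (g : G) (x : X) (h : G) :
    orbitMap f (g • x) h = orbitMap f x (g⁻¹ * h) := by
  simp only [orbitMap, mul_inv_rev, inv_inv, smul_smul]

theorem orbitMap_mem_mapQ_iff {f : X → Y} {x : X} {q : ℕ} :
    orbitMap f x ∈ MapQ G Y q ↔ ¬∃ S : Finset G, S.card = q ∧ ∃ y, ∀ g ∈ S, f (g • x) = y := by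
  classical
  constructor
  · rintro hφ ⟨S, hS, y, hy⟩
    refine hφ S⁻¹ (by rw [Finset.card_inv, hS]) ⟨y, fun g hg => ?_⟩
    simpa [orbitMap] using hy g⁻¹ (Finset.mem_inv'.mp hg)
  · rintro hf S hS ⟨y, hy⟩
    refine hf ⟨S⁻¹, by rw [Finset.card_inv, hS], y, fun g hg => ?_⟩
    simpa [orbitMap] using hy g⁻¹ (Finset.mem_inv'.mp hg)

theorem continuous_orbitMap [TopologicalSpace X] [TopologicalSpace Y] [ContinuousConstSMul G X]
    {f : X → Y} (hf : Continuous f) : Continuous (orbitMap (G := G) f) :=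
  continuous_pi fun h => hf.comp (continuous_const_smul h⁻¹)

theorem eq_orbitMap_of_smul_eq {q : ℕ} {Φ : X → MapQ G Y q}
    (hΦ : ∀ (g : G) x, Φ (g • x) = g • Φ x) (x : X) :
    (Φ x : G → Y) = orbitMap (fun x => (Φ x : G → Y) 1) x := by
  funext h
  rw [orbitMap, hΦ, MapQ.smul_apply, inv_inv, mul_one]

end OrbitMap

theorem statement_0_general {G : Type*} [Group G] {X Y : Type*}
    [TopologicalSpace X] [TopologicalSpace Y]
    [MulAction G X] [ContinuousConstSMul G X]
    {q : ℕ} :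
    ¬ BorsukUlam G X Y q ↔
      ∃ Φ : C(X, MapQ G Y q), ∀ (g : G) (x : X), Φ (g • x) = g • Φ x := by
  constructor
  · intro hBU
    obtain ⟨f, hf⟩ : ∃ f : C(X, Y), ∀ x, orbitMap f x ∈ MapQ G Y q := by
      simpa only [BorsukUlam, not_forall, not_exists, orbitMap_mem_mapQ_iff] using hBU
    exact ⟨⟨fun x => ⟨orbitMap f x, hf x⟩, (continuous_orbitMap f.continuous).subtype_mk _⟩,
      fun g x => Subtype.ext (funext (orbitMap_smul f g x))⟩
  · rintro ⟨Φ, hΦ⟩ hBU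
    let f : C(X, Y) := ⟨fun x => (Φ x : G → Y) 1,
      (continuous_apply 1).comp (continuous_subtype_val.comp Φ.continuous)⟩
    obtain ⟨x, hx⟩ := hBU f
    have hmem : orbitMap f x ∈ MapQ G Y q := eq_orbitMap_of_smul_eq hΦ x ▸ (Φ x).2
    exact orbitMap_mem_mapQ_iff.mp hmem (by simpa only [exists_prop] using hx)

/-- The triple `(X,G;Y)` does not satisfy the `q`-th Borsuk-Ulam property iff
there exists a continuous `G`-equivariant map `X → Map_q(G,Y)`. -/
theorem statement_0 {G : Type*} [Group G] [Fintype G] {X Y : Type*}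
    [TopologicalSpace X] [TopologicalSpace Y] [T2Space Y]
    [MulAction G X] [ContinuousConstSMul G X]
    (hfree : ∀ (g : G) (x : X), g • x = x → g = 1)
    {q : ℕ} (hq2 : 2 ≤ q) (hql : q ≤ Fintype.card G) :
    ¬ BorsukUlam G X Y q ↔
      ∃ Φ : C(X, MapQ G Y q), ∀ (g : G) (x : X), Φ (g • x) = g • Φ x :=
  statement_0_general
end

section
/- Let G be a finite group of order ℓ, let 2 ≤ q ≤ e_ℓ, and let Y be a topological space. Then the G-action on Map_q(G,Y) given by (g•φ)(h) = φ(g⁻¹h) is free: if g•φ = φ for some φ ∈ Map_q(G,Y) and g ∈ G, then g = 1. -/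
theorem minFac_card_le_orderOf {G : Type*} [Group G] [Fintype G] {g : G} (hg : g ≠ 1) :
    (Fintype.card G).minFac ≤ orderOf g := by
  have h_pos : 0 < orderOf g := orderOf_pos g
  have h_ne_one : orderOf g ≠ 1 := mt orderOf_eq_one_iff.mp hg
  exact Nat.minFac_le_of_dvd (by omega) orderOf_dvd_card

namespace MapQ

variable {G Y : Type*} [Group G] {q : ℕ} {φ : G → Y}

theorem apply_pow_mul_of_forall_mul {g : G} (hg : ∀ h, φ (g * h) = φ h) (i : ℕ) (h : G) :
    φ (g ^ i * h) = φ h := by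
  induction i with
  | zero => rw [pow_zero, one_mul]
  | succ n ih => rw [pow_succ', mul_assoc, hg, ih]

/-- If `g` has infinite order then `orderOf g = 0`, and the claim says `q ≠ 0`: indeed
`Map_0(G,Y)` is empty, every `φ` being constant on `∅`. -/
theorem orderOf_lt_of_forall_mul (hφ : φ ∈ MapQ G Y q) {g : G}
    (hg : ∀ h, φ (g * h) = φ h) : orderOf g < q := by
  classical
  by_contra! hq
  refine hφ ((Finset.range q).image (g ^ ·)) ?_ ⟨φ 1, ?_⟩
  · rw [Finset.card_image_of_injOn, Finset.card_range]
    intro i hi j hj hij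
    exact pow_injOn_Iio_orderOf ((Finset.mem_range.mp hi).trans_le hq)
      ((Finset.mem_range.mp hj).trans_le hq) hij
  · rintro _ hx
    obtain ⟨i, -, rfl⟩ := Finset.mem_image.mp hx
    simpa using apply_pow_mul_of_forall_mul hg i 1

end MapQ

theorem statement_1_general {G : Type*} [Group G] [Fintype G] {Y : Type*}
    {q : ℕ} (hq : q ≤ (Fintype.card G).minFac)
    (φ : MapQ G Y q) (g : G) (hgφ : g • φ = φ) : g = 1 := by
  by_contra hg
  have h_inv : ∀ h, (φ : G → Y) (g⁻¹ * h) = (φ : G → Y) h :=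
    congrFun (congrArg Subtype.val hgφ)
  have h_lt : orderOf g < q := orderOf_inv g ▸ MapQ.orderOf_lt_of_forall_mul φ.2 h_inv
  have h_ge : (Fintype.card G).minFac ≤ orderOf g := minFac_card_le_orderOf hg
  omega

/-- For `2 ≤ q ≤ e_ℓ` (the least prime divisor of `ℓ = |G|`), the `G`-action on
`Map_q(G,Y)` given by `(g • φ) h = φ (g⁻¹ h)` is free. -/
theorem statement_1 {G : Type*} [Group G] [Fintype G] {Y : Type*} [TopologicalSpace Y]
    {q : ℕ} (hq2 : 2 ≤ q) (hq : q ≤ (Fintype.card G).minFac)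
    (φ : MapQ G Y q) (g : G) (hgφ : g • φ = φ) : g = 1 :=
  statement_1_general hq φ g hgφ
end

section
/- Let G be a finite group of order ℓ, let 2 ≤ q ≤ e_ℓ, let X be a free G-space and let Y be a Hausdorff topological space. If the triple (X,G;Y) does not satisfy the q-th Borsuk-Ulam property, then secat(X → X/G) ≤ secat(Map_q(G,Y) → Map_q(G,Y)/G), where both maps are the quotient maps by the respective G-actions. -/
/-!
A continuous `f : X → Y` with no `q`-fold coincidence on any orbit yields the equivariant map
`x ↦ (g ↦ f (g⁻¹ • x))` into `Map_q(G,Y)`. The action on `Map_q(G,Y)` is free: a function is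
constant on its stabilizer, and a nontrivial subgroup has at least `minFac |G| ≥ q` elements.

An equivariant map `Φ : X → Z` into a Hausdorff free `G`-space pulls a local section `s` of
`Z → Z/G` over `U` back to one of `X → X/G` over the preimage `V` of `U` under the induced map
`X/G → Z/G`. The points `x` over `V` with `Φ x = s [Φ x]` meet every orbit exactly once, and they
form an open set because the complement is the finite union of the closed sets
`{Φ x = g • s [Φ x]}`, `g ≠ 1`. So the quotient map restricts to a homeomorphism from this set
onto `V`.
-/

open MulAction

namespace MapQ

variable {G Y : Type*} [Group G] {q : ℕ}

instance [TopologicalSpace Y] : ContinuousConstSMul G (MapQ G Y q) where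
  continuous_const_smul g := continuous_induced_rng.2 <|
    continuous_pi fun h => (continuous_apply (g⁻¹ * h)).comp continuous_subtype_val

theorem apply_eq_apply_one_of_mem_stabilizer {φ : MapQ G Y q} {h : G}
    (hh : h ∈ stabilizer G φ) : (φ : G → Y) h = (φ : G → Y) 1 := by
  have hfix : (φ : G → Y) (h⁻¹ * h) = (φ : G → Y) h :=
    congrFun (congrArg Subtype.val (mem_stabilizer_iff.mp hh)) h
  rw [← hfix, inv_mul_cancel]

theorem stabilizer_eq_bot [Finite G] (hq : q ≤ (Nat.card G).minFac) (φ : MapQ G Y q) :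
    stabilizer G φ = ⊥ := by
  by_contra hne
  set H := stabilizer G φ
  have htwo : 2 ≤ Nat.card H := by
    have := (Subgroup.card_eq_one (H := H)).not.mpr hne
    have := Nat.card_pos (α := H)
    omega
  have hqH : q ≤ Nat.card H :=
    hq.trans (Nat.minFac_le_of_dvd htwo (Subgroup.card_subgroup_dvd_card H))
  have hfin := Set.toFinite (H : Set G)
  obtain ⟨S, hSH, hS⟩ := Finset.exists_subset_card_eq (n := q) (s := hfin.toFinset)
    (by rwa [← Set.ncard_eq_toFinset_card _ hfin, ← Nat.card_coe_set_eq])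
  exact φ.2 S hS ⟨_, fun g hg =>
    apply_eq_apply_one_of_mem_stabilizer (hfin.mem_toFinset.mp (hSH hg))⟩

theorem exists_equivariant_of_not_borsukUlam {X : Type*} [TopologicalSpace X]
    [TopologicalSpace Y] [MulAction G X] [ContinuousConstSMul G X]
    (h : ¬ BorsukUlam G X Y q) :
    ∃ Φ : C(X, MapQ G Y q), ∀ (g : G) (x : X), Φ (g • x) = g • Φ x := by
  classical
  unfold BorsukUlam at h
  push Not at h
  obtain ⟨f, hf⟩ := h
  have hmem (x : X) : (fun g : G => f (g⁻¹ • x)) ∈ MapQ G Y q := by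
    rintro S hS ⟨y, hy⟩
    obtain ⟨g, hg, hne⟩ := hf x (S.image (·⁻¹))
      (by rw [Finset.card_image_of_injective _ inv_injective, hS]) y
    obtain ⟨h, hh, rfl⟩ := Finset.mem_image.mp hg
    exact hne (hy h hh)
  refine ⟨⟨fun x => ⟨_, hmem x⟩, Continuous.subtype_mk
    (continuous_pi fun g => f.continuous.comp (continuous_const_smul g⁻¹)) _⟩, fun g x => ?_⟩
  refine Subtype.ext (funext fun h => ?_)
  show f (h⁻¹ • g • x) = f ((g⁻¹ * h)⁻¹ • x)
  rw [mul_inv_rev, inv_inv, mul_smul]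

end MapQ

theorem secat_le_of_preimage_sections {E B E' B' : Type*} [TopologicalSpace E]
    [TopologicalSpace B] [TopologicalSpace E'] [TopologicalSpace B'] {p : E → B} {p' : E' → B'}
    {φ : B → B'} (hφ : Continuous φ)
    (hsec : ∀ U : Set B', (∃ s : C(U, E'), ∀ b : U, p' (s b) = b) →
      ∃ s : C(φ ⁻¹' U, E), ∀ b : φ ⁻¹' U, p (s b) = b) :
    secat p ≤ secat p' := by
  refine le_iInf₂ fun n ⟨U, hU, hcov, hs⟩ => iInf₂_le_of_le n ?_ le_rfl
  refine ⟨fun i => φ ⁻¹' U i, fun i => (hU i).preimage hφ, ?_, fun i => hsec _ (hs i)⟩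
  rw [← Set.preimage_iUnion, hcov, Set.preimage_univ]

section

variable {G X Z : Type*} [Group G] [TopologicalSpace X] [TopologicalSpace Z]
  [MulAction G X] [MulAction G Z]

theorem isOpen_setOf_eq_of_mem_orbit [Finite G] [T2Space Z] [ContinuousConstSMul G Z]
    [IsCancelSMul G Z] {P : Type*} [TopologicalSpace P] {a b : P → Z} (ha : Continuous a)
    (hb : Continuous b) (hab : ∀ p, b p ∈ orbit G (a p)) : IsOpen {p | a p = b p} := by
  have hcompl : {p | a p = b p}ᶜ = ⋃ g ∈ {g : G | g ≠ 1}, {p | b p = g • a p} := by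
    ext p
    simp only [Set.mem_compl_iff, Set.mem_ofPred_eq, Set.mem_iUnion, exists_prop]
    constructor
    · intro hne
      obtain ⟨g, hg⟩ := mem_orbit_iff.mp (hab p)
      exact ⟨g, by rintro rfl; exact hne (by rw [← hg, one_smul]), hg.symm⟩
    · rintro ⟨g, hg1, hg⟩ heq
      exact hg1 (IsCancelSMul.eq_one_of_smul (by rw [← hg, heq]))
  rw [← isClosed_compl_iff, hcompl]
  exact (Set.toFinite _).isClosed_biUnion fun g _ => isClosed_eq hb (ha.const_smul g)

def orbitQuotientMap (Φ : X → Z) (hΦ : ∀ (g : G) (x : X), Φ (g • x) = g • Φ x) :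
    Quotient (orbitRel G X) → Quotient (orbitRel G Z) :=
  Quotient.map' Φ fun _ _ ⟨g, hg⟩ => ⟨g, by simp only [← hΦ, hg]⟩

theorem continuous_orbitQuotientMap {Φ : X → Z} (hc : Continuous Φ)
    (hΦ : ∀ (g : G) (x : X), Φ (g • x) = g • Φ x) : Continuous (orbitQuotientMap Φ hΦ) :=
  hc.quotient_map' _

theorem exists_section_of_orbitQuotientMap [Finite G] [T2Space Z] [ContinuousConstSMul G X]
    [ContinuousConstSMul G Z] [IsCancelSMul G Z] {Φ : X → Z} (hc : Continuous Φ)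
    (hΦ : ∀ (g : G) (x : X), Φ (g • x) = g • Φ x) {U : Set (Quotient (orbitRel G Z))}
    (s : C(U, Z)) (hs : ∀ u : U, Quotient.mk (orbitRel G Z) (s u) = u) :
    ∃ t : C(orbitQuotientMap Φ hΦ ⁻¹' U, X), ∀ v, Quotient.mk (orbitRel G X) (t v) = v := by
  set V := orbitQuotientMap Φ hΦ ⁻¹' U
  let π := Quotient.mk (orbitRel G X)
  let σ : V → Z := fun v => s ⟨orbitQuotientMap Φ hΦ v, v.2⟩
  have hσ : ∀ x (hx : π x ∈ V), σ ⟨π x, hx⟩ ∈ orbit G (Φ x) := fun x hx =>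
    Quotient.exact (hs ⟨orbitQuotientMap Φ hΦ (π x), hx⟩)
  let b : π ⁻¹' V → Z := fun p => σ (V.restrictPreimage π p)
  have hb : Continuous b := s.continuous.comp <| Continuous.subtype_mk
    ((continuous_orbitQuotientMap hc hΦ).comp (continuous_quotient_mk'.comp
      continuous_subtype_val)) _
  let W := {p : π ⁻¹' V | Φ p = b p}
  have hW : IsOpen W := isOpen_setOf_eq_of_mem_orbit (hc.comp continuous_subtype_val) hb
    fun p => hσ p p.2
  let f : W → V := fun w => V.restrictPreimage π w
  have hf : Function.Bijective f := by
    constructor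
    · intro w₁ w₂ h
      obtain ⟨g, hg⟩ := mem_orbit_iff.mp (Quotient.exact (congrArg Subtype.val h))
      have hfix : g • Φ w₂ = Φ w₂ := by
        rw [← hΦ, hg]
        exact w₁.2.trans ((congrArg σ h).trans w₂.2.symm)
      rw [IsCancelSMul.eq_one_of_smul hfix, one_smul] at hg
      exact Subtype.ext (Subtype.ext hg.symm)
    · rintro ⟨v, hv⟩
      obtain ⟨x, rfl⟩ := Quotient.exists_rep v
      obtain ⟨g, hg⟩ := mem_orbit_iff.mp (hσ x hv)
      have hgx : π (g • x) = π x := Quotient.sound (mem_orbit x g)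
      refine ⟨⟨⟨g • x, show π (g • x) ∈ V from hgx ▸ hv⟩, ?_⟩, Subtype.ext hgx⟩
      exact (hΦ g x).trans (hg.trans (congrArg σ (Subtype.ext hgx.symm)))
  let e := (Equiv.ofBijective f hf).toHomeomorphOfContinuousOpen
    ((continuous_quotient_mk'.restrictPreimage (s := V)).comp continuous_subtype_val)
    ((isOpenMap_quotient_mk'_mul.restrictPreimage V).comp hW.isOpenMap_subtype_val)
  exact ⟨⟨fun v => (e.symm v : X), continuous_subtype_val.comp
      (continuous_subtype_val.comp e.symm.continuous)⟩,
    fun v => congrArg Subtype.val (e.apply_symm_apply v)⟩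

theorem secat_quotient_le_of_equivariant [Finite G] [T2Space Z] [ContinuousConstSMul G X]
    [ContinuousConstSMul G Z] [IsCancelSMul G Z] (Φ : C(X, Z))
    (hΦ : ∀ (g : G) (x : X), Φ (g • x) = g • Φ x) :
    secat (Quotient.mk (orbitRel G X)) ≤ secat (Quotient.mk (orbitRel G Z)) :=
  secat_le_of_preimage_sections (continuous_orbitQuotientMap Φ.continuous hΦ)
    fun _ ⟨s, hs⟩ => exists_section_of_orbitQuotientMap Φ.continuous hΦ s hs

end

theorem statement_4_general {G : Type*} [Group G] [Fintype G] {X Y : Type*}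
    [TopologicalSpace X] [TopologicalSpace Y] [T2Space Y]
    [MulAction G X] [ContinuousConstSMul G X]
    {q : ℕ} (hq : q ≤ (Fintype.card G).minFac)
    (hbup : ¬ BorsukUlam G X Y q) :
    secat (Quotient.mk (MulAction.orbitRel G X)) ≤
      secat (Quotient.mk (MulAction.orbitRel G (MapQ G Y q))) := by
  obtain ⟨Φ, hΦ⟩ := MapQ.exists_equivariant_of_not_borsukUlam hbup
  have : IsCancelSMul G (MapQ G Y q) := isCancelSMul_iff_stabilizer_eq_bot.mpr
    (MapQ.stabilizer_eq_bot (Nat.card_eq_fintype_card (α := G) ▸ hq))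
  exact secat_quotient_le_of_equivariant Φ hΦ

/-- If `(X,G;Y)` does not satisfy the `q`-th Borsuk-Ulam property, then
`secat(X → X/G) ≤ secat(Map_q(G,Y) → Map_q(G,Y)/G)`. -/
theorem statement_4 {G : Type*} [Group G] [Fintype G] {X Y : Type*}
    [TopologicalSpace X] [TopologicalSpace Y] [T2Space Y]
    [MulAction G X] [ContinuousConstSMul G X]
    (hfree : ∀ (g : G) (x : X), g • x = x → g = 1)
    {q : ℕ} (hq2 : 2 ≤ q) (hq : q ≤ (Fintype.card G).minFac)
    (hbup : ¬ BorsukUlam G X Y q) :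
    secat (Quotient.mk (MulAction.orbitRel G X)) ≤
      secat (Quotient.mk (MulAction.orbitRel G (MapQ G Y q))) :=
  statement_4_general hq hbup
end

section
/- Let p be a prime, let 2 ≤ q ≤ p and let n ≥ 1. Consider the cyclic group ℤ_p = ℤ/pℤ acting on Map_q(ℤ_p, ℝⁿ) by (g•φ)(h) = φ(g⁻¹h) (a free action). Then secat(Map_q(ℤ_p, ℝⁿ) → Map_q(ℤ_p, ℝⁿ)/ℤ_p) ≤ (n-1)(p-1) + q - 1. -/
namespace Statement6Aux

open MulAction

/-! ### General topology: sections from open fundamental domains -/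

/-- The quotient map by a group action with continuous translations is open. -/
theorem isOpenMap_quotientMk {E : Type*} [TopologicalSpace E] {G : Type*} [Group G]
    [MulAction G E] (hc : ∀ g : G, Continuous (fun x : E => g • x)) :
    IsOpenMap (Quotient.mk (orbitRel G E)) := by
  intro W hW
  rw [isOpen_coinduced]
  have : (Quotient.mk (orbitRel G E)) ⁻¹' ((Quotient.mk (orbitRel G E)) '' W)
      = ⋃ g : G, (fun x : E => g • x) ⁻¹' W := by
    ext x
    simp only [Set.mem_preimage, Set.mem_image, Set.mem_iUnion]
    constructor
    · rintro ⟨w, hw, hww⟩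
      obtain ⟨g, hg⟩ : w ∈ orbit G x := Quotient.exact hww
      exact ⟨g, by simpa [hg] using hw⟩
    · rintro ⟨g, hg⟩
      refine ⟨g • x, hg, Quotient.sound ⟨g, rfl⟩⟩
  show IsOpen ((Quotient.mk (orbitRel G E)) ⁻¹' ((Quotient.mk (orbitRel G E)) '' W))
  rw [this]
  exact isOpen_iUnion fun g => (hW.preimage (hc g))

theorem exists_section {E B : Type*} [TopologicalSpace E] [TopologicalSpace B] {π : E → B}
    (hπo : IsOpenMap π) {D : Set E} (hD : IsOpen D)
    (hinj : ∀ x ∈ D, ∀ y ∈ D, π x = π y → x = y) :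
    ∃ s : C(π '' D, E), ∀ b : π '' D, π (s b) = (b : B) := by
  classical
  have hsel : ∀ b : π '' D, ∃ x, x ∈ D ∧ π x = (b : B) := fun b => b.2
  choose f hfD hfπ using hsel
  refine ⟨⟨f, ?_⟩, hfπ⟩
  rw [continuous_def]
  intro W hW
  have : f ⁻¹' W = Subtype.val ⁻¹' (π '' (W ∩ D)) := by
    ext b
    simp only [Set.mem_preimage, Set.mem_image, Set.mem_inter_iff]
    constructor
    · intro hb
      exact ⟨f b, ⟨hb, hfD b⟩, hfπ b⟩
    · rintro ⟨x, ⟨hxW, hxD⟩, hxb⟩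
      have : x = f b := hinj x hxD (f b) (hfD b) (by rw [hxb, hfπ b])
      rwa [← this]
  rw [this]
  exact (hπo _ (hW.inter hD)).preimage continuous_subtype_val


/-! ### Shift action on finsets of `Multiplicative (ZMod p)` -/

variable {p : ℕ}

private abbrev G' (p : ℕ) := Multiplicative (ZMod p)

def shiftSetoid (p : ℕ) : Setoid (Finset (G' p)) where
  r S T := ∃ g : G' p, S.image (g * ·) = T
  iseqv := by
    constructor
    · intro S; exact ⟨1, by simp⟩
    · rintro S T ⟨g, rfl⟩
      refine ⟨g⁻¹, ?_⟩
      rw [Finset.image_image]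
      have : ((g⁻¹ * ·) ∘ (g * ·)) = id := by funext x; simp
      rw [this, Finset.image_id]
    · rintro S T V ⟨g, rfl⟩ ⟨h, rfl⟩
      refine ⟨h * g, ?_⟩
      rw [Finset.image_image]
      congr 1
      funext x
      simp [mul_assoc]

noncomputable def rep (p : ℕ) (S : Finset (G' p)) : Finset (G' p) :=
  Quotient.out (Quotient.mk (shiftSetoid p) S)

theorem rep_rel (S : Finset (G' p)) : ∃ g : G' p, (rep p S).image (g * ·) = S := by
  have h : Quotient.mk (shiftSetoid p) (rep p S) = Quotient.mk (shiftSetoid p) S :=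
    Quotient.out_eq _
  exact Quotient.exact h

theorem rep_idem (S : Finset (G' p)) : rep p (rep p S) = rep p S := by
  unfold rep
  rw [Quotient.out_eq]

theorem rep_shift (g : G' p) (S : Finset (G' p)) : rep p (S.image (g * ·)) = rep p S := by
  unfold rep
  congr 1
  letI := shiftSetoid p
  exact Quotient.sound (Setoid.symm ⟨g, rfl⟩)

/-- Freeness: a nonempty finset of `ZMod p` (`p` prime) invariant under a nontrivial
shift is everything. -/
theorem eq_univ_of_shift_invariant [NeZero p] (hp : p.Prime) {g : G' p} (hg : g ≠ 1)
    {S : Finset (G' p)} (hne : S.Nonempty) (hinv : ∀ s ∈ S, g * s ∈ S) :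
    S = Finset.univ := by
  haveI : Fact p.Prime := ⟨hp⟩
  obtain ⟨s₀, hs₀⟩ := hne
  have hpow : ∀ k : ℕ, g ^ k * s₀ ∈ S := by
    intro k
    induction k with
    | zero => simpa using hs₀
    | succ k ih =>
      have : g ^ (k + 1) * s₀ = g * (g ^ k * s₀) := by rw [pow_succ, mul_comm (g ^ k) g, mul_assoc]
      rw [this]
      exact hinv _ ih
  apply Finset.eq_univ_of_forall
  intro x
  set a : ZMod p := Multiplicative.toAdd g with ha
  have ha0 : a ≠ 0 := by
    intro h0
    apply hg
    have : Multiplicative.toAdd g = Multiplicative.toAdd (1 : G' p) := by rw [toAdd_one]; exact h0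
    exact Multiplicative.toAdd.injective this
  set k : ℕ := ((Multiplicative.toAdd x - Multiplicative.toAdd s₀) * a⁻¹).val with hk
  have key : g ^ k * s₀ = x := by
    apply Multiplicative.toAdd.injective
    have : Multiplicative.toAdd (g ^ k * s₀) = k • a + Multiplicative.toAdd s₀ := by
      rw [toAdd_mul, toAdd_pow]
    rw [this]
    have hcast : ((k : ℕ) : ZMod p) = (Multiplicative.toAdd x - Multiplicative.toAdd s₀) * a⁻¹ :=
      ZMod.natCast_rightInverse _
    rw [nsmul_eq_mul, hcast, mul_assoc, inv_mul_cancel₀ ha0, mul_one]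
    ring
  rw [← key]
  exact hpow k


/-! ### The gap sets -/

/-- `OSet i S`: functions whose `i`-th coordinate is strictly larger on `S` than off `S`. -/
def OSet (p q n : ℕ) (i : Fin n) (S : Finset (G' p)) :
    Set (MapQ (G' p) (Fin n → ℝ) q) :=
  {φ | ∀ g ∈ S, ∀ h ∉ S, (φ : G' p → Fin n → ℝ) h i < (φ : G' p → Fin n → ℝ) g i}

/-- `DSet i j`: union of the `OSet i S` over canonical representatives `S` of cardinality `j`. -/
noncomputable def DSet (p q n : ℕ) (i : Fin n) (j : ℕ) :
    Set (MapQ (G' p) (Fin n → ℝ) q) :=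
  ⋃ (S : Finset (G' p)) (_ : S.card = j ∧ rep p S = S), OSet p q n i S

theorem isOpen_OSet [NeZero p] {q n : ℕ} (i : Fin n) (S : Finset (G' p)) :
    IsOpen (OSet p q n i S) := by
  classical
  have hrw : OSet p q n i S = ⋂ (g : G' p) (h : G' p),
      {φ : MapQ (G' p) (Fin n → ℝ) q |
        g ∈ S → h ∉ S → (φ : G' p → Fin n → ℝ) h i < (φ : G' p → Fin n → ℝ) g i} := by
    ext φ
    simp only [OSet, Set.mem_setOf_eq, Set.mem_iInter]
    exact ⟨fun H a b ha hb => H a ha b hb, fun H a ha b hb => H a b ha hb⟩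
  rw [hrw]
  refine isOpen_iInter_of_finite fun g => isOpen_iInter_of_finite fun h => ?_
  by_cases hg : g ∈ S
  · by_cases hh : h ∈ S
    · have : {φ : MapQ (G' p) (Fin n → ℝ) q |
          g ∈ S → h ∉ S → (φ : G' p → Fin n → ℝ) h i < (φ : G' p → Fin n → ℝ) g i}
          = Set.univ := by
        ext φ; simp [hh]
      rw [this]; exact isOpen_univ
    · have : {φ : MapQ (G' p) (Fin n → ℝ) q |
          g ∈ S → h ∉ S → (φ : G' p → Fin n → ℝ) h i < (φ : G' p → Fin n → ℝ) g i}
          = {φ : MapQ (G' p) (Fin n → ℝ) q |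
              (φ : G' p → Fin n → ℝ) h i < (φ : G' p → Fin n → ℝ) g i} := by
        ext φ; simp [hg, hh]
      rw [this]
      exact isOpen_lt
        ((continuous_apply i).comp ((continuous_apply h).comp continuous_subtype_val))
        ((continuous_apply i).comp ((continuous_apply g).comp continuous_subtype_val))
  · have : {φ : MapQ (G' p) (Fin n → ℝ) q |
        g ∈ S → h ∉ S → (φ : G' p → Fin n → ℝ) h i < (φ : G' p → Fin n → ℝ) g i}
        = Set.univ := by
      ext φ; simp [hg]
    rw [this]; exact isOpen_univ

theorem isOpen_DSet [NeZero p] {q n : ℕ} (i : Fin n) (j : ℕ) :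
    IsOpen (DSet p q n i j) :=
  isOpen_iUnion fun S => isOpen_iUnion fun _ => isOpen_OSet i S

theorem smul_mem_OSet {q n : ℕ} {i : Fin n} {S : Finset (G' p)}
    {φ : MapQ (G' p) (Fin n → ℝ) q} (hφ : φ ∈ OSet p q n i S) (g : G' p) :
    g • φ ∈ OSet p q n i (S.image (g * ·)) := by
  classical
  intro g' hg' h' hh'
  obtain ⟨a, ha, rfl⟩ := Finset.mem_image.mp hg'
  have hmem : g⁻¹ * h' ∉ S := by
    intro hmem
    exact hh' (Finset.mem_image.mpr ⟨g⁻¹ * h', hmem, by group⟩)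
  have key := hφ a ha (g⁻¹ * h') hmem
  show ((g • φ : MapQ (G' p) (Fin n → ℝ) q) : G' p → Fin n → ℝ) h' i
      < ((g • φ : MapQ (G' p) (Fin n → ℝ) q) : G' p → Fin n → ℝ) (g * a) i
  show (φ : G' p → Fin n → ℝ) (g⁻¹ * h') i < (φ : G' p → Fin n → ℝ) (g⁻¹ * (g * a)) i
  rwa [inv_mul_cancel_left]

theorem OSet_eq_of_mem {q n : ℕ} {i : Fin n} {S S' : Finset (G' p)}
    (hcard : S.card = S'.card) {φ : MapQ (G' p) (Fin n → ℝ) q}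
    (h1 : φ ∈ OSet p q n i S) (h2 : φ ∈ OSet p q n i S') : S = S' := by
  by_contra hne
  have hns : ¬ S ⊆ S' := fun hsub => hne (Finset.eq_of_subset_of_card_le hsub hcard.ge)
  have hns' : ¬ S' ⊆ S := fun hsub => hne (Finset.eq_of_subset_of_card_le hsub hcard.le).symm
  obtain ⟨g₀, hg₀S, hg₀S'⟩ := Finset.not_subset.mp hns
  obtain ⟨h₀, hh₀S', hh₀S⟩ := Finset.not_subset.mp hns'
  exact absurd (h1 g₀ hg₀S h₀ hh₀S) (not_lt.mpr (h2 h₀ hh₀S' g₀ hg₀S').le)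

/-- Every point of `OSet i S` with `|S| = j` has its orbit class in the image of `DSet i j`. -/
theorem mk_mem_image_DSet {q n : ℕ} {i : Fin n} {S : Finset (G' p)} {j : ℕ}
    (hcard : S.card = j) {φ : MapQ (G' p) (Fin n → ℝ) q} (hφ : φ ∈ OSet p q n i S) :
    Quotient.mk (MulAction.orbitRel (G' p) (MapQ (G' p) (Fin n → ℝ) q)) φ
      ∈ Quotient.mk (MulAction.orbitRel (G' p) (MapQ (G' p) (Fin n → ℝ) q)) ''
        (DSet p q n i j) := by
  classical
  obtain ⟨g, hg⟩ := rep_rel S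
  refine ⟨g⁻¹ • φ, ?_, Quotient.sound ⟨g⁻¹, rfl⟩⟩
  have h1 : g⁻¹ • φ ∈ OSet p q n i (S.image (g⁻¹ * ·)) := smul_mem_OSet hφ g⁻¹
  have h2 : S.image (g⁻¹ * ·) = rep p S := by
    conv_lhs => rw [← hg]
    rw [Finset.image_image]
    have : ((g⁻¹ * ·) ∘ (g * ·)) = id := by funext x; simp
    rw [this, Finset.image_id]
  rw [h2] at h1
  have hcard' : (rep p S).card = j := by
    have h3 := Finset.card_image_of_injective (rep p S) (mul_right_injective g)
    rw [hg] at h3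
    exact h3.symm.trans hcard
  exact Set.mem_iUnion.mpr ⟨rep p S, Set.mem_iUnion.mpr ⟨⟨hcard', rep_idem S⟩, h1⟩⟩

/-- Injectivity of the quotient map on `DSet i j` for `1 ≤ j ≤ p - 1`. -/
theorem injOn_DSet (hp : p.Prime) [NeZero p] {q n : ℕ} {i : Fin n} {j : ℕ}
    (hj : 1 ≤ j) (hjp : j + 1 ≤ p) :
    ∀ φ ∈ DSet p q n i j, ∀ φ' ∈ DSet p q n i j,
      Quotient.mk (MulAction.orbitRel (G' p) (MapQ (G' p) (Fin n → ℝ) q)) φ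
        = Quotient.mk (MulAction.orbitRel (G' p) (MapQ (G' p) (Fin n → ℝ) q)) φ'
      → φ = φ' := by
  classical
  intro φ hφ φ' hφ' heq
  obtain ⟨S, hS⟩ := Set.mem_iUnion.mp hφ
  obtain ⟨⟨hScard, hSrep⟩, hφS⟩ := Set.mem_iUnion.mp hS
  obtain ⟨S', hS'⟩ := Set.mem_iUnion.mp hφ'
  obtain ⟨⟨hS'card, hS'rep⟩, hφ'S'⟩ := Set.mem_iUnion.mp hS'
  obtain ⟨g, hg⟩ : φ ∈ MulAction.orbit (G' p) φ' := Quotient.exact heq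
  have hgφ : g • φ' = φ := hg
  have h1 : g • φ' ∈ OSet p q n i (S'.image (g * ·)) := smul_mem_OSet hφ'S' g
  rw [hgφ] at h1
  have hcardim : S.card = (S'.image (g * ·)).card := by
    rw [Finset.card_image_of_injective _ (mul_right_injective g), hScard, hS'card]
  have hSeq : S = S'.image (g * ·) := OSet_eq_of_mem hcardim hφS h1
  have hSS' : S = S' := by
    rw [← hSrep, hSeq, rep_shift, hS'rep]
  by_cases hg1 : g = 1
  · rw [← hgφ, hg1, one_smul]
  · exfalso
    have hinv : ∀ s ∈ S', g * s ∈ S' := by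
      intro s hs
      have : g * s ∈ S'.image (g * ·) := Finset.mem_image_of_mem _ hs
      rwa [← hSeq, hSS'] at this
    have hne : S'.Nonempty := Finset.card_pos.mp (by omega)
    have huniv := eq_univ_of_shift_invariant hp hg1 hne hinv
    have : S'.card = p := by
      rw [huniv, Finset.card_univ, Fintype.card_multiplicative, ZMod.card]
    omega

theorem continuous_smul_mapq {q n : ℕ} (g : G' p) :
    Continuous (fun φ : MapQ (G' p) (Fin n → ℝ) q => g • φ) := by
  apply Continuous.subtype_mk
  exact continuous_pi fun h => (continuous_apply (g⁻¹ * h)).comp continuous_subtype_val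


/-- Covering: every `φ ∈ Map_q` has a gap at some coordinate `i` and level `j`, where
`j ≤ q - 1` may be required when `i = 0` and `j ≤ p - 1` otherwise. -/
theorem exists_argmax [NeZero p] {q n : ℕ} (hq2 : 2 ≤ q) (hn : 1 ≤ n)
    (φ : MapQ (G' p) (Fin n → ℝ) q) :
    ∃ (i : Fin n) (S : Finset (G' p)), (φ : MapQ (G' p) (Fin n → ℝ) q) ∈ OSet p q n i S
      ∧ 1 ≤ S.card ∧
      ((i.val = 0 ∧ S.card + 1 ≤ q) ∨ (1 ≤ i.val ∧ S.card + 1 ≤ p)) := by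
  classical
  set f : G' p → Fin n → ℝ := (φ : G' p → Fin n → ℝ) with hf
  let maxset : Fin n → Finset (G' p) :=
    fun i => Finset.univ.filter (fun g => ∀ h : G' p, f h i ≤ f g i)
  have hgap : ∀ i : Fin n, (φ : MapQ (G' p) (Fin n → ℝ) q) ∈ OSet p q n i (maxset i) := by
    intro i g hg h hh
    have hgmax : ∀ h' : G' p, f h' i ≤ f g i := (Finset.mem_filter.mp hg).2
    refine lt_of_le_of_ne (hgmax h) fun hcontra => ?_
    exact hh (Finset.mem_filter.mpr ⟨Finset.mem_univ _,
      fun h' => le_trans (hgmax h') (le_of_eq hcontra.symm)⟩)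
  have hne : ∀ i : Fin n, (maxset i).Nonempty := by
    intro i
    obtain ⟨b, _, hb⟩ := Finset.exists_max_image Finset.univ (fun g => f g i)
      (Finset.univ_nonempty)
    exact ⟨b, Finset.mem_filter.mpr ⟨Finset.mem_univ _, fun h => hb h (Finset.mem_univ h)⟩⟩
  by_cases hC : ∀ i : Fin n, 0 < i.val → ∀ g h : G' p, f g i = f h i
  · -- all nonzero coordinates constant: use coordinate 0
    set i₀ : Fin n := ⟨0, hn⟩ with hi₀
    refine ⟨i₀, maxset i₀, hgap i₀, Finset.card_pos.mpr (hne i₀), Or.inl ⟨rfl, ?_⟩⟩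
    by_contra hcard
    push_neg at hcard
    have hq' : q ≤ (maxset i₀).card := by omega
    obtain ⟨T, hTsub, hTcard⟩ := Finset.exists_subset_card_eq hq'
    have hTne : T.Nonempty := Finset.card_pos.mp (by omega)
    obtain ⟨g₀, hg₀⟩ := hTne
    refine φ.2 T hTcard ⟨f g₀, fun g hg => ?_⟩
    funext i'
    by_cases hi' : i'.val = 0
    · have hii : i' = i₀ := Fin.ext hi'
      have h1 : ∀ h' : G' p, f h' i₀ ≤ f g i₀ := (Finset.mem_filter.mp (hTsub hg)).2
      have h2 : ∀ h' : G' p, f h' i₀ ≤ f g₀ i₀ := (Finset.mem_filter.mp (hTsub hg₀)).2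
      rw [hii]
      exact le_antisymm (h2 g) (h1 g₀)
    · exact hC i' (Nat.pos_of_ne_zero hi') g g₀
  · -- some nonzero coordinate is nonconstant
    push_neg at hC
    obtain ⟨i, hi, g, h, hgh⟩ := hC
    refine ⟨i, maxset i, hgap i, Finset.card_pos.mpr (hne i), Or.inr ⟨hi, ?_⟩⟩
    have hnotuniv : maxset i ≠ Finset.univ := by
      intro huniv
      rcases lt_or_gt_of_ne hgh with hlt | hlt
      · have hgmem : g ∈ maxset i := huniv ▸ Finset.mem_univ g
        exact absurd ((Finset.mem_filter.mp hgmem).2 h) (not_le.mpr hlt)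
      · have hhmem : h ∈ maxset i := huniv ▸ Finset.mem_univ h
        exact absurd ((Finset.mem_filter.mp hhmem).2 g) (not_le.mpr hlt)
    have hlt : (maxset i).card < p := by
      have := Finset.card_lt_card (Finset.ssubset_univ_iff.mpr hnotuniv)
      rwa [Finset.card_univ, Fintype.card_multiplicative, ZMod.card] at this
    omega


/-! ### Index bookkeeping -/

def cf (p q n : ℕ) (hn : 0 < n) (hpm : 0 < p - 1) (k : ℕ)
    (hk : k < (n - 1) * (p - 1) + (q - 1)) : Fin n :=
  if h : k + 1 < q then ⟨0, hn⟩
  else ⟨(k - (q - 1)) / (p - 1) + 1, by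
    have h1 : k - (q - 1) < (n - 1) * (p - 1) := by omega
    have h2 := (Nat.div_lt_iff_lt_mul hpm).mpr h1
    omega⟩

def lf (p q : ℕ) (k : ℕ) : ℕ :=
  if k + 1 < q then k + 1 else (k - (q - 1)) % (p - 1) + 1

theorem cf_val_of_lt {p q n : ℕ} (hn : 0 < n) (hpm : 0 < p - 1) {k : ℕ}
    (hk : k < (n - 1) * (p - 1) + (q - 1)) (h : k + 1 < q) :
    (cf p q n hn hpm k hk).val = 0 := by
  unfold cf; rw [dif_pos h]

theorem cf_val_of_ge {p q n : ℕ} (hn : 0 < n) (hpm : 0 < p - 1) {k : ℕ}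
    (hk : k < (n - 1) * (p - 1) + (q - 1)) (h : ¬ k + 1 < q) :
    (cf p q n hn hpm k hk).val = (k - (q - 1)) / (p - 1) + 1 := by
  unfold cf; rw [dif_neg h]

theorem lf_of_lt {p q : ℕ} {k : ℕ} (h : k + 1 < q) : lf p q k = k + 1 := by
  unfold lf; rw [if_pos h]

theorem lf_of_ge {p q : ℕ} {k : ℕ} (h : ¬ k + 1 < q) :
    lf p q k = (k - (q - 1)) % (p - 1) + 1 := by
  unfold lf; rw [if_neg h]

theorem lf_ge_one {p q : ℕ} (k : ℕ) : 1 ≤ lf p q k := by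
  unfold lf; split <;> omega

theorem lf_le {p q : ℕ} (hq2 : 2 ≤ q) (hqp : q ≤ p) (hpm : 0 < p - 1) (k : ℕ) :
    lf p q k + 1 ≤ p := by
  unfold lf
  split
  · omega
  · have := Nat.mod_lt (k - (q - 1)) hpm
    omega

end Statement6Aux

/-- `secat(Map_q(ℤ_p, ℝⁿ) → Map_q(ℤ_p, ℝⁿ)/ℤ_p) ≤ (n-1)(p-1) + q - 1`. -/
theorem statement_6 (p q n : ℕ) (hp : p.Prime) (hq2 : 2 ≤ q) (hqp : q ≤ p) (hn : 1 ≤ n) :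
    secat (Quotient.mk (MulAction.orbitRel (Multiplicative (ZMod p))
        (MapQ (Multiplicative (ZMod p)) (Fin n → ℝ) q)))
      ≤ (((n - 1) * (p - 1) + q - 1 : ℕ) : ℕ∞) := by
  classical
  haveI : NeZero p := ⟨hp.pos.ne'⟩
  have hp2 : 2 ≤ p := hp.two_le
  have hpm : 0 < p - 1 := by omega
  have hn0 : 0 < n := hn
  set N : ℕ := (n - 1) * (p - 1) + q - 1 with hN
  have hNeq : N = (n - 1) * (p - 1) + (q - 1) := by omega
  have hπo : IsOpenMap (Quotient.mk (MulAction.orbitRel (Multiplicative (ZMod p))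
      (MapQ (Multiplicative (ZMod p)) (Fin n → ℝ) q))) :=
    Statement6Aux.isOpenMap_quotientMk fun g => Statement6Aux.continuous_smul_mapq g
  unfold secat
  refine iInf₂_le N ⟨fun k => (Quotient.mk (MulAction.orbitRel (Multiplicative (ZMod p))
      (MapQ (Multiplicative (ZMod p)) (Fin n → ℝ) q))) ''
        (Statement6Aux.DSet p q n (Statement6Aux.cf p q n hn0 hpm k.val (hNeq ▸ k.2))
          (Statement6Aux.lf p q k.val)), ?_, ?_, ?_⟩
  · intro k
    exact hπo _ (Statement6Aux.isOpen_DSet _ _)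
  · -- covering
    refine Set.eq_univ_of_forall fun b => ?_
    obtain ⟨φ, rfl⟩ := Quotient.exists_rep b
    obtain ⟨i, S, hOS, hS1, hcase⟩ := Statement6Aux.exists_argmax hq2 hn φ
    rw [Set.mem_iUnion]
    rcases hcase with ⟨hi0, hSq⟩ | ⟨hi1, hSp⟩
    · -- coordinate 0, level S.card ≤ q - 1
      have hkN : S.card - 1 < N := by omega
      refine ⟨⟨S.card - 1, hkN⟩, ?_⟩
      have hcond : S.card - 1 + 1 < q := by omega
      have hcf : Statement6Aux.cf p q n hn0 hpm (S.card - 1) (hNeq ▸ hkN) = i := by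
        apply Fin.ext
        rw [Statement6Aux.cf_val_of_lt hn0 hpm _ hcond, hi0]
      have hlf : Statement6Aux.lf p q (S.card - 1) = S.card := by
        rw [Statement6Aux.lf_of_lt hcond]; omega
      show _ ∈ _ '' (Statement6Aux.DSet p q n
        (Statement6Aux.cf p q n hn0 hpm (S.card - 1) (hNeq ▸ hkN))
        (Statement6Aux.lf p q (S.card - 1)))
      rw [hcf, hlf]
      exact Statement6Aux.mk_mem_image_DSet rfl hOS
    · -- coordinate i ≥ 1, level S.card ≤ p - 1
      have hin : i.val < n := i.2
      have hmul : (i.val - 1) * (p - 1) + (p - 1) ≤ (n - 1) * (p - 1) := by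
        have h4 : i.val - 1 + 1 ≤ n - 1 := by omega
        calc (i.val - 1) * (p - 1) + (p - 1) = (i.val - 1 + 1) * (p - 1) := by ring
          _ ≤ (n - 1) * (p - 1) := Nat.mul_le_mul_right _ h4
      have hkN : (q - 1) + ((S.card - 1) + (i.val - 1) * (p - 1)) < N := by omega
      refine ⟨⟨(q - 1) + ((S.card - 1) + (i.val - 1) * (p - 1)), hkN⟩, ?_⟩
      have hcond : ¬ ((q - 1) + ((S.card - 1) + (i.val - 1) * (p - 1)) + 1 < q) := by omega
      have hsub : (q - 1) + ((S.card - 1) + (i.val - 1) * (p - 1)) - (q - 1)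
          = (S.card - 1) + (i.val - 1) * (p - 1) := by omega
      have hcf : Statement6Aux.cf p q n hn0 hpm
          ((q - 1) + ((S.card - 1) + (i.val - 1) * (p - 1))) (hNeq ▸ hkN) = i := by
        apply Fin.ext
        rw [Statement6Aux.cf_val_of_ge hn0 hpm _ hcond, hsub,
          Nat.add_mul_div_right _ _ hpm, Nat.div_eq_of_lt (by omega : S.card - 1 < p - 1)]
        omega
      have hlf : Statement6Aux.lf p q ((q - 1) + ((S.card - 1) + (i.val - 1) * (p - 1)))
          = S.card := by
        rw [Statement6Aux.lf_of_ge hcond, hsub, Nat.add_mul_mod_self_right,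
          Nat.mod_eq_of_lt (by omega : S.card - 1 < p - 1)]
        omega
      show _ ∈ _ '' (Statement6Aux.DSet p q n
        (Statement6Aux.cf p q n hn0 hpm
          ((q - 1) + ((S.card - 1) + (i.val - 1) * (p - 1))) (hNeq ▸ hkN))
        (Statement6Aux.lf p q ((q - 1) + ((S.card - 1) + (i.val - 1) * (p - 1)))))
      rw [hcf, hlf]
      exact Statement6Aux.mk_mem_image_DSet rfl hOS
  · -- sections
    intro k
    exact Statement6Aux.exists_section hπo (Statement6Aux.isOpen_DSet _ _)
      (Statement6Aux.injOn_DSet hp (Statement6Aux.lf_ge_one _)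
        (Statement6Aux.lf_le hq2 hqp hpm _))
end

section
/- Let p be a prime, let 2 ≤ q ≤ p, let X be a free ℤ_p-space (ℤ_p = ℤ/pℤ), and let n ∈ ℕ. If there exists a continuous ℤ_p-equivariant map X → Map_q(ℤ_p, ℝ^{n+1}), then secat(X → X/ℤ_p) ≤ n(p-1) + q - 1. In particular, secat(X → X/ℤ_p) ≤ ind_q(X,ℤ_p)·(p-1) + q - 1 whenever ind_q(X,ℤ_p) is finite. -/
open MulAction in
lemma sectionOfLabel {G X : Type*} [Group G] [TopologicalSpace X] [MulAction G X]
    [ContinuousConstSMul G X] {W : Set X} (hW : IsOpen W)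
    (hinv : ∀ (g : G), ∀ x ∈ W, g • x ∈ W) (c : X → G)
    (heq : ∀ (g : G), ∀ x ∈ W, c (g • x) = g * c x)
    (hlc : ∀ x ∈ W, ∃ V : Set X, IsOpen V ∧ x ∈ V ∧ V ⊆ W ∧ ∀ y ∈ V, c y = c x) :
    IsOpen (Quotient.mk (orbitRel G X) '' W) ∧
      ∃ s : C(Quotient.mk (orbitRel G X) '' W, X),
        ∀ b : Quotient.mk (orbitRel G X) '' W, Quotient.mk (orbitRel G X) (s b) = (b : _) := by
  classical
  set π := Quotient.mk (orbitRel G X) with hπ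
  have hrel : ∀ x y : X, π x = π y ↔ ∃ g : G, g • y = x := by
    intro x y
    constructor
    · intro h
      exact (Quotient.eq'.mp h : orbitRel G X x y)
    · intro ⟨g, hg⟩
      exact Quotient.sound (orbitRel_apply.mpr ⟨g, hg⟩)
  -- openness of saturations of open sets
  have hsat : ∀ (A : Set X), IsOpen A → IsOpen (π '' A) := by
    intro A hA
    have hq : Topology.IsQuotientMap π := isQuotientMap_quot_mk
    rw [← hq.isOpen_preimage]
    have : π ⁻¹' (π '' A) = ⋃ g : G, (fun x => g • x) ⁻¹' A := by
      ext x
      simp only [Set.mem_preimage, Set.mem_image, Set.mem_iUnion]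
      constructor
      · rintro ⟨a, ha, hax⟩
        obtain ⟨g, hg⟩ := (hrel a x).mp hax
        exact ⟨g, hg ▸ ha⟩
      · rintro ⟨g, hg⟩
        exact ⟨g • x, hg, (hrel _ x).mpr ⟨g, rfl⟩⟩
    rw [this]
    exact isOpen_iUnion fun g => hA.preimage (continuous_const_smul g)
  refine ⟨hsat W hW, ?_⟩
  set Z : Set X := {x | x ∈ W ∧ c x = 1} with hZ
  have hZopen : IsOpen Z := by
    rw [isOpen_iff_forall_mem_open]
    rintro z ⟨hzW, hz1⟩
    obtain ⟨V, hVo, hzV, hVW, hVc⟩ := hlc z hzW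
    exact ⟨V, fun y hy => ⟨hVW hy, (hVc y hy).trans hz1⟩, hVo, hzV⟩
  have hZrep : ∀ x ∈ W, (c x)⁻¹ • x ∈ Z ∧ π ((c x)⁻¹ • x) = π x := by
    intro x hx
    refine ⟨⟨hinv _ x hx, ?_⟩, (hrel _ x).mpr ⟨(c x)⁻¹, rfl⟩⟩
    rw [heq _ x hx, inv_mul_cancel]
  have hZuniq : ∀ z ∈ Z, ∀ z' ∈ Z, π z = π z' → z = z' := by
    rintro z ⟨hzW, hz1⟩ z' ⟨hz'W, hz'1⟩ hzz
    obtain ⟨g, hg⟩ := (hrel z z').mp hzz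
    have : g = 1 := by
      have := heq g z' hz'W
      rw [hg, hz1, hz'1, mul_one] at this
      exact this.symm
    rw [← hg, this, one_smul]
  -- the section
  have hchoice : ∀ b : π '' W, ∃ x, x ∈ W ∧ π x = (b : _) := fun b => b.2
  set σ : π '' W → X := fun b => (c (hchoice b).choose)⁻¹ • (hchoice b).choose with hσ
  have hσZ : ∀ b, σ b ∈ Z ∧ π (σ b) = (b : _) := by
    intro b
    obtain ⟨hxW, hxb⟩ := (hchoice b).choose_spec
    obtain ⟨h1, h2⟩ := hZrep _ hxW
    exact ⟨h1, h2.trans hxb⟩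
  have hkey : ∀ (z : X), z ∈ Z → ∀ b : π '' W, π z = (b : _) → σ b = z := by
    intro z hz b hb
    exact hZuniq _ (hσZ b).1 _ hz ((hσZ b).2.trans hb.symm)
  have hcont : Continuous σ := by
    rw [continuous_def]
    intro O hO
    have : σ ⁻¹' O = Subtype.val ⁻¹' (π '' (Z ∩ O)) := by
      ext b
      simp only [Set.mem_preimage, Set.mem_image]
      constructor
      · intro h
        exact ⟨σ b, ⟨(hσZ b).1, h⟩, (hσZ b).2⟩
      · rintro ⟨z, ⟨hzZ, hzO⟩, hzb⟩
        rw [hkey z hzZ b hzb]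
        exact hzO
    rw [this]
    exact (hsat _ (hZopen.inter hO)).preimage continuous_subtype_val
  exact ⟨⟨σ, hcont⟩, fun b => (hσZ b).2⟩

section Aux
variable {p n q : ℕ} [NeZero p] {X : Type*} [TopologicalSpace X]
  [MulAction (Multiplicative (ZMod p)) X]

/-- evaluation of `Φ`. -/
def fa (Φ : C(X, MapQ (Multiplicative (ZMod p)) (Fin (n+1) → ℝ) q)) (x : X) :
    Multiplicative (ZMod p) → Fin (n+1) → ℝ := (Φ x : Multiplicative (ZMod p) → Fin (n+1) → ℝ)

lemma fa_cont (Φ : C(X, MapQ (Multiplicative (ZMod p)) (Fin (n+1) → ℝ) q))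
    (g : Multiplicative (ZMod p)) (i : Fin (n+1)) : Continuous fun x => fa Φ x g i :=
by
  have : Continuous fun x : X => (Φ x : Multiplicative (ZMod p) → Fin (n+1) → ℝ) :=
    continuous_subtype_val.comp Φ.continuous
  exact ((continuous_apply i).comp (continuous_apply g)).comp this

lemma fa_smul (Φ : C(X, MapQ (Multiplicative (ZMod p)) (Fin (n+1) → ℝ) q))
    (hΦ : ∀ (g : Multiplicative (ZMod p)) (x : X), Φ (g • x) = g • Φ x)
    (g : Multiplicative (ZMod p)) (x : X) (h : Multiplicative (ZMod p)) :
    fa Φ (g • x) h = fa Φ x (g⁻¹ * h) := by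
  unfold fa
  rw [hΦ g x]
  rfl

/-- the open set of configurations having a "gap" after a top set of `j` elements in
coordinate `i`. -/
def Wset (Φ : C(X, MapQ (Multiplicative (ZMod p)) (Fin (n+1) → ℝ) q))
    (i : Fin (n+1)) (j : ℕ) : Set X :=
  {x | ∃ T : Finset (Multiplicative (ZMod p)), ∃ r : ℝ, T.card = j ∧
    (∀ g ∈ T, r < fa Φ x g i) ∧ ∀ h ∉ T, fa Φ x h i < r}

lemma Wset_open (Φ : C(X, MapQ (Multiplicative (ZMod p)) (Fin (n+1) → ℝ) q))
    (i : Fin (n+1)) (j : ℕ) : IsOpen (Wset Φ i j) := by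
  classical
  have : Wset Φ i j = ⋃ T : Finset (Multiplicative (ZMod p)), ⋃ r : ℝ,
      ⋃ (_ : T.card = j),
      ((⋂ g ∈ T, {x | r < fa Φ x g i}) ∩ ⋂ g ∈ Tᶜ, {x | fa Φ x g i < r}) := by
    ext x
    simp only [Wset, Set.mem_setOf_eq, Set.mem_iUnion, Set.mem_inter_iff, Set.mem_iInter,
      Finset.mem_compl]
    tauto
  rw [this]
  refine isOpen_iUnion fun T => isOpen_iUnion fun r => isOpen_iUnion fun _ => IsOpen.inter ?_ ?_
  · exact isOpen_biInter_finset fun g _ => isOpen_lt continuous_const (fa_cont Φ g i)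
  · exact isOpen_biInter_finset fun g _ => isOpen_lt (fa_cont Φ g i) continuous_const

lemma Wset_uniq (Φ : C(X, MapQ (Multiplicative (ZMod p)) (Fin (n+1) → ℝ) q))
    (i : Fin (n+1)) {x : X} {T T' : Finset (Multiplicative (ZMod p))} {r r' : ℝ}
    (hcard : T.card = T'.card)
    (h1 : ∀ g ∈ T, r < fa Φ x g i) (h2 : ∀ h ∉ T, fa Φ x h i < r)
    (h1' : ∀ g ∈ T', r' < fa Φ x g i) (h2' : ∀ h ∉ T', fa Φ x h i < r') :
    T = T' := by
  classical
  have hsub : T ⊆ T' := by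
    intro g hg
    by_contra hg'
    have hTT' : ¬ T' ⊆ T := by
      intro hss
      have : T' = T := Finset.eq_of_subset_of_card_le hss hcard.le
      exact hg' (this ▸ hg)
    obtain ⟨g', hg'T', hg'T⟩ := Finset.not_subset.mp hTT'
    have a1 := h1 g hg
    have a2 := h2' g hg'
    have a3 := h1' g' hg'T'
    have a4 := h2 g' hg'T
    linarith
  exact Finset.eq_of_subset_of_card_le hsub hcard.ge

lemma Wset_inv (Φ : C(X, MapQ (Multiplicative (ZMod p)) (Fin (n+1) → ℝ) q))
    (hΦ : ∀ (g : Multiplicative (ZMod p)) (x : X), Φ (g • x) = g • Φ x)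
    (i : Fin (n+1)) (j : ℕ) {x : X} {T : Finset (Multiplicative (ZMod p))} {r : ℝ}
    (hc : T.card = j) (h1 : ∀ g ∈ T, r < fa Φ x g i) (h2 : ∀ h ∉ T, fa Φ x h i < r)
    (g : Multiplicative (ZMod p)) :
    (T.image (fun t => g * t)).card = j ∧
    (∀ g' ∈ T.image (fun t => g * t), r < fa Φ (g • x) g' i) ∧
    ∀ h ∉ T.image (fun t => g * t), fa Φ (g • x) h i < r := by
  classical
  refine ⟨by rwa [Finset.card_image_of_injective _ (mul_right_injective g)], ?_, ?_⟩
  · rintro g' hg'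
    obtain ⟨t, ht, rfl⟩ := Finset.mem_image.mp hg'
    rw [fa_smul Φ hΦ, inv_mul_cancel_left]
    exact h1 t ht
  · intro h hh
    rw [fa_smul Φ hΦ]
    refine h2 _ fun hmem => hh ?_
    exact Finset.mem_image.mpr ⟨g⁻¹ * h, hmem, by rw [mul_inv_cancel_left]⟩


open Classical in
/-- the equivariant label of a gap set. -/
noncomputable def lab (Φ : C(X, MapQ (Multiplicative (ZMod p)) (Fin (n+1) → ℝ) q))
    (i : Fin (n+1)) (j : ℕ) : X → Multiplicative (ZMod p) :=
  fun x => if hx : x ∈ Wset Φ i j then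
    Multiplicative.ofAdd (((j : ZMod p)⁻¹ * ∑ t ∈ hx.choose, Multiplicative.toAdd t : ZMod p))
  else 1

lemma lab_spec (Φ : C(X, MapQ (Multiplicative (ZMod p)) (Fin (n+1) → ℝ) q))
    (i : Fin (n+1)) (j : ℕ) {x : X} {T : Finset (Multiplicative (ZMod p))} {r : ℝ}
    (hc : T.card = j) (h1 : ∀ g ∈ T, r < fa Φ x g i) (h2 : ∀ h ∉ T, fa Φ x h i < r) :
    lab Φ i j x =
      Multiplicative.ofAdd (((j : ZMod p)⁻¹ * ∑ t ∈ T, Multiplicative.toAdd t : ZMod p)) := by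
  have hx : x ∈ Wset Φ i j := ⟨T, r, hc, h1, h2⟩
  unfold lab
  rw [dif_pos hx]
  obtain ⟨r₀, hc₀, h1₀, h2₀⟩ := hx.choose_spec
  rw [Wset_uniq Φ i (hc₀.trans hc.symm) h1₀ h2₀ h1 h2]

lemma lab_equivariant (hp : p.Prime) (Φ : C(X, MapQ (Multiplicative (ZMod p)) (Fin (n+1) → ℝ) q))
    (hΦ : ∀ (g : Multiplicative (ZMod p)) (x : X), Φ (g • x) = g • Φ x)
    (i : Fin (n+1)) (j : ℕ) (hj1 : 1 ≤ j) (hjp : j ≤ p - 1)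
    (g : Multiplicative (ZMod p)) {x : X} (hx : x ∈ Wset Φ i j) :
    lab Φ i j (g • x) = g * lab Φ i j x := by
  classical
  haveI : Fact p.Prime := ⟨hp⟩
  obtain ⟨T, r, hc, h1, h2⟩ := hx
  obtain ⟨hc', h1', h2'⟩ := Wset_inv Φ hΦ i j hc h1 h2 g
  rw [lab_spec Φ i j hc h1 h2, lab_spec Φ i j hc' h1' h2']
  have hsum : (∑ t ∈ T.image (fun t => g * t), Multiplicative.toAdd t)
      = j • Multiplicative.toAdd g + ∑ t ∈ T, Multiplicative.toAdd t := by
    rw [Finset.sum_image (fun a _ b _ h => mul_right_injective g h)]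
    simp only [toAdd_mul]
    rw [Finset.sum_add_distrib, Finset.sum_const, hc]
  have hj0 : (j : ZMod p) ≠ 0 := by
    rw [Ne, ZMod.natCast_eq_zero_iff]
    intro hdvd
    rcases Nat.eq_zero_of_dvd_of_lt hdvd (by omega) with h
    omega
  rw [hsum, nsmul_eq_mul, mul_add, ← mul_assoc, inv_mul_cancel₀ hj0, one_mul]
  rw [ofAdd_add]
  congr 1

lemma lab_locally_constant (Φ : C(X, MapQ (Multiplicative (ZMod p)) (Fin (n+1) → ℝ) q))
    (i : Fin (n+1)) (j : ℕ) {x : X} (hx : x ∈ Wset Φ i j) :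
    ∃ V : Set X, IsOpen V ∧ x ∈ V ∧ V ⊆ Wset Φ i j ∧ ∀ y ∈ V, lab Φ i j y = lab Φ i j x := by
  classical
  obtain ⟨T, r, hc, h1, h2⟩ := hx
  refine ⟨(⋂ g ∈ T, {y | r < fa Φ y g i}) ∩ ⋂ g ∈ Tᶜ, {y | fa Φ y g i < r}, ?_, ?_, ?_, ?_⟩
  · refine IsOpen.inter ?_ ?_
    · exact isOpen_biInter_finset fun g _ => isOpen_lt continuous_const (fa_cont Φ g i)
    · exact isOpen_biInter_finset fun g _ => isOpen_lt (fa_cont Φ g i) continuous_const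
  · simp only [Set.mem_inter_iff, Set.mem_iInter, Set.mem_setOf_eq, Finset.mem_compl]
    exact ⟨h1, fun g hg => h2 g hg⟩
  · rintro y ⟨hy1, hy2⟩
    simp only [Set.mem_iInter, Set.mem_setOf_eq, Finset.mem_compl] at hy1 hy2
    exact ⟨T, r, hc, hy1, hy2⟩
  · rintro y ⟨hy1, hy2⟩
    simp only [Set.mem_iInter, Set.mem_setOf_eq, Finset.mem_compl] at hy1 hy2
    rw [lab_spec Φ i j hc hy1 hy2, lab_spec Φ i j hc h1 h2]


lemma Wcover (hp : p.Prime) (hq2 : 2 ≤ q) (hqp : q ≤ p)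
    (Φ : C(X, MapQ (Multiplicative (ZMod p)) (Fin (n+1) → ℝ) q)) (x : X) :
    (∃ i : Fin n, ∃ j : Fin (p-1), x ∈ Wset Φ i.castSucc (j.1+1)) ∨
    (∃ j : Fin (q-1), x ∈ Wset Φ (Fin.last n) (j.1+1)) := by
  classical
  by_contra hcon
  push_neg at hcon
  obtain ⟨hA, hB⟩ := hcon
  have hcardG : Fintype.card (Multiplicative (ZMod p)) = p := by
    rw [Fintype.card_multiplicative, ZMod.card]
  have hne : (Finset.univ : Finset (Multiplicative (ZMod p))).Nonempty := ⟨1, Finset.mem_univ 1⟩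
  set M : Fin (n+1) → ℝ := fun i => Finset.univ.sup' hne (fun g => fa Φ x g i) with hM
  set T : Fin (n+1) → Finset (Multiplicative (ZMod p)) :=
    fun i => Finset.univ.filter (fun g => fa Φ x g i = M i) with hT
  have hTne : ∀ i, (T i).Nonempty := by
    intro i
    obtain ⟨g, -, hg⟩ := Finset.exists_mem_eq_sup' hne (fun g => fa Φ x g i)
    exact ⟨g, Finset.mem_filter.mpr ⟨Finset.mem_univ g, hg.symm⟩⟩
  have hle : ∀ i g, fa Φ x g i ≤ M i := fun i g =>
    Finset.le_sup' (fun g => fa Φ x g i) (Finset.mem_univ g)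
  -- if the argmax set is proper, we get a gap witness
  have hwit : ∀ i : Fin (n+1), T i ≠ Finset.univ → x ∈ Wset Φ i (T i).card := by
    intro i hTi
    have hU : (Finset.univ \ T i).Nonempty := by
      rw [Finset.sdiff_nonempty]
      intro hsub
      exact hTi (Finset.univ_subset_iff.mp hsub)
    set m : ℝ := (Finset.univ \ T i).sup' hU (fun g => fa Φ x g i) with hm
    have hmM : m < M i := by
      rw [hm, Finset.sup'_lt_iff]
      intro g hg
      rcases Finset.mem_sdiff.mp hg with ⟨-, hgT⟩
      rcases lt_or_eq_of_le (hle i g) with h | h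
      · exact h
      · exact absurd (Finset.mem_filter.mpr ⟨Finset.mem_univ g, h⟩) hgT
    refine ⟨T i, (m + M i)/2, rfl, ?_, ?_⟩
    · intro g hg
      have : fa Φ x g i = M i := (Finset.mem_filter.mp hg).2
      rw [this]
      linarith
    · intro h hh
      have : fa Φ x h i ≤ m :=
        Finset.le_sup' (fun g => fa Φ x g i) (Finset.mem_sdiff.mpr ⟨Finset.mem_univ h, hh⟩)
      linarith
  have hcardlt : ∀ i : Fin (n+1), T i ≠ Finset.univ → (T i).card ≤ p - 1 := by
    intro i hTi
    have h := Finset.card_lt_card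
      (⟨Finset.subset_univ _, fun h => hTi (Finset.univ_subset_iff.mp h)⟩ :
        T i ⊂ Finset.univ)
    rw [Finset.card_univ, hcardG] at h
    omega
  -- first n coordinates are constant
  have hconst : ∀ i : Fin n, T i.castSucc = Finset.univ := by
    intro i
    by_contra hTi
    have hw := hwit i.castSucc hTi
    have h1 : 1 ≤ (T i.castSucc).card := Finset.card_pos.mpr (hTne _)
    have h2 : (T i.castSucc).card ≤ p - 1 := hcardlt _ hTi
    have := hA i ⟨(T i.castSucc).card - 1, by omega⟩
    rw [show (T i.castSucc).card - 1 + 1 = (T i.castSucc).card by omega] at this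
    exact this hw
  -- the top set of the last coordinate has at least q elements
  have hq : q ≤ (T (Fin.last n)).card := by
    by_contra hq'
    push_neg at hq'
    have h1 : 1 ≤ (T (Fin.last n)).card := Finset.card_pos.mpr (hTne _)
    have hTi : T (Fin.last n) ≠ Finset.univ := by
      intro h
      have hcard : (T (Fin.last n)).card = p := by rw [h, Finset.card_univ, hcardG]
      omega
    have hw := hwit (Fin.last n) hTi
    have := hB ⟨(T (Fin.last n)).card - 1, by omega⟩
    rw [show (T (Fin.last n)).card - 1 + 1 = (T (Fin.last n)).card by omega] at this
    exact this hw
  -- extract a q-element subset on which Φ x is constant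
  obtain ⟨S, hST, hScard⟩ := Finset.exists_subset_card_eq hq
  obtain ⟨g₁, hg₁⟩ := Finset.card_pos.mp (by omega : 0 < S.card)
  refine (Φ x).2 S hScard ⟨fa Φ x g₁, ?_⟩
  intro g hg
  show fa Φ x g = fa Φ x g₁
  funext i
  refine Fin.lastCases ?_ ?_ i
  · have h1 : fa Φ x g (Fin.last n) = M (Fin.last n) :=
      (Finset.mem_filter.mp (hST hg)).2
    have h2 : fa Φ x g₁ (Fin.last n) = M (Fin.last n) :=
      (Finset.mem_filter.mp (hST hg₁)).2
    rw [h1, h2]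
  · intro i
    have hmem1 : g ∈ T i.castSucc := (hconst i).symm ▸ Finset.mem_univ g
    have hmem2 : g₁ ∈ T i.castSucc := (hconst i).symm ▸ Finset.mem_univ g₁
    have h1 : fa Φ x g i.castSucc = M i.castSucc := (Finset.mem_filter.mp hmem1).2
    have h2 : fa Φ x g₁ i.castSucc = M i.castSucc := (Finset.mem_filter.mp hmem2).2
    rw [h1, h2]

lemma Wmain [ContinuousConstSMul (Multiplicative (ZMod p)) X] (hp : p.Prime) (Φ : C(X, MapQ (Multiplicative (ZMod p)) (Fin (n+1) → ℝ) q))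
    (hΦ : ∀ (g : Multiplicative (ZMod p)) (x : X), Φ (g • x) = g • Φ x)
    (i : Fin (n+1)) (j : ℕ) (hj1 : 1 ≤ j) (hjp : j ≤ p - 1) :
    IsOpen (Quotient.mk (MulAction.orbitRel (Multiplicative (ZMod p)) X) '' Wset Φ i j) ∧
      ∃ s : C(Quotient.mk (MulAction.orbitRel (Multiplicative (ZMod p)) X) '' Wset Φ i j, X),
        ∀ b, Quotient.mk (MulAction.orbitRel (Multiplicative (ZMod p)) X) (s b) = (b : _) := by
  refine sectionOfLabel (Wset_open Φ i j) ?_ (lab Φ i j)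
    (fun g x hx => lab_equivariant hp Φ hΦ i j hj1 hjp g hx)
    (fun x hx => lab_locally_constant Φ i j hx)
  intro g x hx
  obtain ⟨T, r, hc, h1, h2⟩ := hx
  obtain ⟨hc', h1', h2'⟩ := Wset_inv Φ hΦ i j hc h1 h2 g
  exact ⟨_, r, hc', h1', h2'⟩

lemma key [ContinuousConstSMul (Multiplicative (ZMod p)) X] (hp : p.Prime) (hq2 : 2 ≤ q) (hqp : q ≤ p)
    (Φ : C(X, MapQ (Multiplicative (ZMod p)) (Fin (n+1) → ℝ) q))
    (hΦ : ∀ (g : Multiplicative (ZMod p)) (x : X), Φ (g • x) = g • Φ x) :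
    secat (Quotient.mk (MulAction.orbitRel (Multiplicative (ZMod p)) X))
      ≤ ((n * (p - 1) + q - 1 : ℕ) : ℕ∞) := by
  classical
  set π := Quotient.mk (MulAction.orbitRel (Multiplicative (ZMod p)) X) with hπ
  set I := (Fin n × Fin (p-1)) ⊕ Fin (q-1) with hI
  have hcard : Fintype.card I = n * (p - 1) + q - 1 := by
    have h2 : 1 ≤ q := by omega
    simp only [hI, Fintype.card_sum, Fintype.card_prod, Fintype.card_fin]
    omega
  let e : I ≃ Fin (n * (p - 1) + q - 1) := Fintype.equivFinOfCardEq hcard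
  let coord : I → Fin (n+1) := Sum.elim (fun ij => ij.1.castSucc) (fun _ => Fin.last n)
  let lvl : I → ℕ := Sum.elim (fun ij => ij.2.1+1) (fun j => j.1+1)
  have hlvl : ∀ idx : I, 1 ≤ lvl idx ∧ lvl idx ≤ p - 1 := by
    rintro (⟨i, j⟩ | j) <;>
      simp only [lvl, Sum.elim_inl, Sum.elim_inr]
    · have := j.2
      omega
    · have := j.2
      have hp2 := hp.two_le
      omega
  let U : Fin (n * (p - 1) + q - 1) → Set (Quotient (MulAction.orbitRel (Multiplicative (ZMod p)) X)) :=
    fun k => π '' Wset Φ (coord (e.symm k)) (lvl (e.symm k))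
  have hU : ∃ U : Fin (n * (p - 1) + q - 1) →
      Set (Quotient (MulAction.orbitRel (Multiplicative (ZMod p)) X)),
      (∀ i, IsOpen (U i)) ∧ (⋃ i, U i) = Set.univ ∧
      ∀ i, ∃ s : C(U i, X), ∀ b : U i, π (s b) = (b : _) := by
    refine ⟨U, ?_, ?_, ?_⟩
    · intro k
      exact (Wmain hp Φ hΦ _ _ (hlvl (e.symm k)).1 (hlvl (e.symm k)).2).1
    · rw [Set.eq_univ_iff_forall]
      intro b
      obtain ⟨x, rfl⟩ := Quot.exists_rep b
      rcases Wcover (n := n) hp hq2 hqp Φ x with ⟨i, j, hx⟩ | ⟨j, hx⟩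
      · refine Set.mem_iUnion.mpr ⟨e (Sum.inl (i, j)), ?_⟩
        show _ ∈ π '' _
        rw [e.symm_apply_apply]
        exact ⟨x, hx, rfl⟩
      · refine Set.mem_iUnion.mpr ⟨e (Sum.inr j), ?_⟩
        show _ ∈ π '' _
        rw [e.symm_apply_apply]
        exact ⟨x, hx, rfl⟩
    · intro k
      exact (Wmain hp Φ hΦ _ _ (hlvl (e.symm k)).1 (hlvl (e.symm k)).2).2
  unfold secat
  exact iInf_le_of_le (n * (p - 1) + q - 1) (iInf_le_of_le hU le_rfl)

end Aux


/-- If there is a continuous `ℤ_p`-equivariant map `X → Map_q(ℤ_p, ℝ^{n+1})`,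
then `secat(X → X/ℤ_p) ≤ n(p-1) + q - 1`; in particular
`secat(X → X/ℤ_p) ≤ ind_q(X,ℤ_p)(p-1) + q - 1` whenever `ind_q(X,ℤ_p)` is finite. -/
theorem statement_8 (p : ℕ) (hp : p.Prime) {q : ℕ} (hq2 : 2 ≤ q) (hqp : q ≤ p)
    {X : Type*} [TopologicalSpace X] [MulAction (Multiplicative (ZMod p)) X]
    [ContinuousConstSMul (Multiplicative (ZMod p)) X]
    (hfree : ∀ (g : Multiplicative (ZMod p)) (x : X), g • x = x → g = 1) :
    (∀ n : ℕ,
      (∃ Φ : C(X, MapQ (Multiplicative (ZMod p)) (Fin (n + 1) → ℝ) q),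
        ∀ (g : Multiplicative (ZMod p)) (x : X), Φ (g • x) = g • Φ x) →
      secat (Quotient.mk (MulAction.orbitRel (Multiplicative (ZMod p)) X))
        ≤ ((n * (p - 1) + q - 1 : ℕ) : ℕ∞)) ∧
    (indexQ (Multiplicative (ZMod p)) X q < ⊤ →
      secat (Quotient.mk (MulAction.orbitRel (Multiplicative (ZMod p)) X))
        ≤ indexQ (Multiplicative (ZMod p)) X q * ((p - 1 : ℕ) : ℕ∞) + ((q - 1 : ℕ) : ℕ∞)) := by
  classical
  haveI : NeZero p := ⟨hp.ne_zero⟩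
  constructor
  · rintro n ⟨Φ, hΦ⟩
    exact key hp hq2 hqp Φ hΦ
  · intro hlt
    have hex : ∃ k : ℕ, ∃ Φ : C(X, MapQ (Multiplicative (ZMod p)) (Fin (k + 1) → ℝ) q),
        ∀ (g : Multiplicative (ZMod p)) (x : X), Φ (g • x) = g • Φ x := by
      by_contra hcon
      have : indexQ (Multiplicative (ZMod p)) X q = ⊤ := by
        unfold indexQ
        rw [iInf_eq_top]
        intro k
        rw [iInf_eq_top]
        intro hk
        exact absurd ⟨k, hk⟩ hcon
      rw [this] at hlt
      exact absurd hlt (lt_irrefl ⊤)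
    set k₀ := Nat.find hex with hk₀
    obtain ⟨Φ, hΦ⟩ := Nat.find_spec hex
    have h1 := key hp hq2 hqp Φ hΦ
    have h2 : (k₀ : ℕ∞) ≤ indexQ (Multiplicative (ZMod p)) X q := by
      unfold indexQ
      refine le_iInf fun k => le_iInf fun hk' => ?_
      exact_mod_cast Nat.find_min' hex hk'
    refine le_trans h1 ?_
    have harith : (k₀ * (p - 1) + q - 1 : ℕ) = k₀ * (p - 1) + (q - 1) := by omega
    rw [harith, Nat.cast_add, Nat.cast_mul]
    exact add_le_add_left (mul_le_mul_left h2 _) _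
end

section
/- Let p be a prime, let 2 ≤ q ≤ p and let X be a free ℤ_p-space (ℤ_p = ℤ/pℤ). If secat(X → X/ℤ_p) ≥ q, then there is no continuous ℤ_p-equivariant map X → Map_q(ℤ_p, ℝ); that is, ind_q(X,ℤ_p) ≥ 1. -/
/-!
An equivariant `φ : X → Map_q(ℤ_p, ℝ)` gives every point `x` a top set: a set `A ⊆ ℤ_p` on which
all values of `φ x` exceed all values off `A` (for instance the maximisers of `φ x`, of which there
are between `1` and `q - 1`). Translating `x` translates its top sets. A nonempty proper subset of
`ℤ_p` has trivial stabiliser because its size is invertible mod `p`, so exactly one translate of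
`A` has sum `0`. Hence for each `1 ≤ j < q` the points with a top set of size `j` and sum `0` form
an open set meeting every orbit at most once, and the images of these `q - 1` sets are open sets
with local sections covering `X/ℤ_p`: `secat ≤ q - 1`. The bound on the index is the case
`ℝ¹ = ℝ` of the same statement.
-/
open Finset MulAction Topology
open scoped Pointwise

lemma MapQ.coe_smul {G Y : Type*} [Group G] {q : ℕ} (g : G) (φ : MapQ G Y q) (h : G) :
    ((g • φ : MapQ G Y q) : G → Y) h = (φ : G → Y) (g⁻¹ * h) :=
  rfl

lemma MapQ.comp_mem {G Y Z : Type*} [Nonempty Y] {q : ℕ} {e : Y → Z}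
    (he : Function.Injective e) {φ : G → Y} (hφ : φ ∈ MapQ G Y q) : e ∘ φ ∈ MapQ G Z q := by
  rintro S hS ⟨z, hz⟩
  exact hφ S hS ⟨Function.invFun e z, fun g hg => by
    rw [← hz g hg, Function.comp_apply, Function.leftInverse_invFun he]⟩

section TopSet

variable {G : Type*}

def IsTopSet (v : G → ℝ) (A : Finset G) : Prop :=
  ∀ g ∈ A, ∀ h ∉ A, v h < v g

lemma isOpen_setOf_isTopSet [Finite G] (A : Finset G) :
    IsOpen {v : G → ℝ | IsTopSet v A} := by
  simp only [IsTopSet, Set.ofPred_forall]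
  exact isOpen_iInter_of_finite fun g => isOpen_iInter_of_finite fun _ =>
    isOpen_iInter_of_finite fun h => isOpen_iInter_of_finite fun _ =>
      isOpen_lt (continuous_apply h) (continuous_apply g)

lemma IsTopSet.eq_of_card_eq {v : G → ℝ} {A B : Finset G} (hA : IsTopSet v A)
    (hB : IsTopSet v B) (hcard : #A = #B) : A = B := by
  by_contra hne
  obtain ⟨g, hgA, hgB⟩ := not_subset.1 fun h => hne (eq_of_subset_of_card_le h hcard.ge)
  obtain ⟨h, hhB, hhA⟩ := not_subset.1 fun h => hne (eq_of_subset_of_card_le h hcard.le).symm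
  exact (hA g hgA h hhA).asymm (hB h hhB g hgB)

lemma isTopSet_comp_mul_left [Group G] [DecidableEq G] {v : G → ℝ} {A : Finset G} (k : G) :
    IsTopSet (fun h => v (k * h)) A ↔ IsTopSet v (k • A) := by
  constructor
  · intro hv g hg h hh
    obtain ⟨a, ha, rfl⟩ := mem_smul_finset.1 hg
    have : k⁻¹ * h ∉ A := fun h' => hh (by simpa using smul_mem_smul_finset (a := k) h')
    simpa using hv a ha _ this
  · intro hv g hg h hh
    exact hv _ (smul_mem_smul_finset hg) _ ((smul_mem_smul_finset_iff k).not.2 hh)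

lemma exists_isTopSet_of_mem_mapQ [Fintype G] [Nonempty G] {q : ℕ} {v : G → ℝ}
    (hv : v ∈ MapQ G ℝ q) : ∃ A : Finset G, IsTopSet v A ∧ 0 < #A ∧ #A < q := by
  classical
  obtain ⟨g₀, -, hg₀⟩ := exists_max_image univ v univ_nonempty
  refine ⟨({g | v g₀ ≤ v g} : Finset G), fun g hg h hh => ?_, card_pos.2 ⟨g₀, by simp⟩, ?_⟩
  · simp only [mem_filter, mem_univ, true_and, not_le] at hg hh
    exact hh.trans_le hg
  · by_contra! hq
    obtain ⟨S, hS, hcard⟩ := exists_subset_card_eq hq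
    exact hv S hcard ⟨v g₀, fun g hg =>
      le_antisymm (hg₀ g (mem_univ g)) (mem_filter.1 (hS hg)).2⟩

end TopSet

lemma sum_toAdd_smul_finset {M : Type*} [AddCommGroup M] [DecidableEq M]
    (k : Multiplicative M) (A : Finset (Multiplicative M)) :
    ∑ a ∈ k • A, a.toAdd = ∑ a ∈ A, a.toAdd + #A • k.toAdd := by
  rw [smul_finset_def, sum_image (MulAction.injective k).injOn]
  simp only [smul_eq_mul, toAdd_mul, sum_add_distrib, sum_const, add_comm]

section Centred

variable {p : ℕ}

def centredTopLocus (p j : ℕ) : Set (Multiplicative (ZMod p) → ℝ) :=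
  {v | ∃ A : Finset (Multiplicative (ZMod p)), #A = j ∧ ∑ a ∈ A, a.toAdd = 0 ∧ IsTopSet v A}

lemma isOpen_centredTopLocus [NeZero p] (j : ℕ) : IsOpen (centredTopLocus p j) := by
  simp only [centredTopLocus, Set.ofPred_exists, Set.ofPred_and]
  exact isOpen_iUnion fun A => isOpen_const.inter (isOpen_const.inter (isOpen_setOf_isTopSet A))

lemma ZMod.natCast_ne_zero_of_pos_of_lt {j : ℕ} (hj0 : 0 < j) (hjp : j < p) : (j : ZMod p) ≠ 0 :=
  (ZMod.natCast_eq_zero_iff j p).not.2 (Nat.not_dvd_of_pos_of_lt hj0 hjp)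

lemma eq_one_of_mem_centredTopLocus (hp : p.Prime) {j : ℕ} (hj0 : 0 < j) (hjp : j < p)
    {v : Multiplicative (ZMod p) → ℝ} {k : Multiplicative (ZMod p)} (hv : v ∈ centredTopLocus p j)
    (hvk : (fun h => v (k * h)) ∈ centredTopLocus p j) : k = 1 := by
  have := Fact.mk hp
  obtain ⟨A, hAcard, hAsum, hA⟩ := hv
  obtain ⟨B, hBcard, hBsum, hB⟩ := hvk
  have hkB : k • B = A :=
    ((isTopSet_comp_mul_left k).1 hB).eq_of_card_eq hA (by rw [card_smul_finset, hAcard, hBcard])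
  have hjk : (j : ZMod p) * k.toAdd = 0 := by
    rw [← nsmul_eq_mul, ← hBcard, ← hAsum, ← hkB, sum_toAdd_smul_finset, hBsum, zero_add]
  exact toAdd_eq_zero.1
    ((mul_eq_zero.1 hjk).resolve_left (ZMod.natCast_ne_zero_of_pos_of_lt hj0 hjp))

lemma exists_comp_mul_left_mem_centredTopLocus (hp : p.Prime) {v : Multiplicative (ZMod p) → ℝ}
    {A : Finset (Multiplicative (ZMod p))} (hA : IsTopSet v A) (hA0 : 0 < #A) (hAp : #A < p) :
    ∃ k, (fun h => v (k * h)) ∈ centredTopLocus p #A := by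
  have := Fact.mk hp
  set k : Multiplicative (ZMod p) := .ofAdd ((#A : ZMod p)⁻¹ * ∑ a ∈ A, a.toAdd)
  refine ⟨k, k⁻¹ • A, card_smul_finset _ _, ?_, by rwa [isTopSet_comp_mul_left, smul_inv_smul]⟩
  rw [sum_toAdd_smul_finset, toAdd_inv, nsmul_eq_mul, mul_neg, toAdd_ofAdd,
    mul_inv_cancel_left₀ (ZMod.natCast_ne_zero_of_pos_of_lt hA0 hAp), add_neg_cancel]

end Centred

section Secat

variable {G X : Type*} [Group G] [TopologicalSpace X] [MulAction G X] [ContinuousConstSMul G X]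

lemma IsOpen.exists_section_quotientMk {W : Set X} (hW : IsOpen W)
    (hinj : W.InjOn (Quotient.mk (orbitRel G X))) :
    ∃ s : C(Quotient.mk (orbitRel G X) '' W, X), ∀ b, Quotient.mk (orbitRel G X) (s b) = b := by
  have hemb : IsEmbedding (W.domRestrict (Quotient.mk (orbitRel G X))) :=
    (IsOpenEmbedding.of_continuous_injective_isOpenMap
      (continuous_quot_mk.comp continuous_subtype_val) hinj.injective
      (isOpenQuotientMap_quotientMk.isOpenMap.comp hW.isOpenMap_subtype_val)).isEmbedding
  let e := hemb.toHomeomorph.trans (Homeomorph.setCongr (Set.range_domRestrict _ _))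
  refine ⟨⟨Subtype.val ∘ e.symm, by fun_prop⟩, fun b => ?_⟩
  exact congrArg Subtype.val (e.apply_symm_apply b)

lemma secat_quotientMk_le {n : ℕ} (W : Fin n → Set X) (hW : ∀ i, IsOpen (W i))
    (hinj : ∀ i, (W i).InjOn (Quotient.mk (orbitRel G X)))
    (hcover : ∀ x : X, ∃ i, ∃ g : G, g • x ∈ W i) :
    secat (Quotient.mk (orbitRel G X)) ≤ n := by
  refine iInf₂_le n ⟨fun i => Quotient.mk _ '' W i,
    fun i => isOpenQuotientMap_quotientMk.isOpenMap _ (hW i), ?_,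
    fun i => (hW i).exists_section_quotientMk (hinj i)⟩
  refine Set.eq_univ_of_forall fun b => ?_
  obtain ⟨x, rfl⟩ := Quotient.exists_rep b
  obtain ⟨i, g, hg⟩ := hcover x
  exact Set.mem_iUnion.2 ⟨i, g • x, hg, Quotient.sound (mem_orbit x g)⟩

end Secat

theorem secat_quotientMk_le_of_equivariant {p : ℕ} (hp : p.Prime) {q : ℕ} (hqp : q ≤ p)
    {X : Type*} [TopologicalSpace X] [MulAction (Multiplicative (ZMod p)) X]
    [ContinuousConstSMul (Multiplicative (ZMod p)) X]
    (φ : X → Multiplicative (ZMod p) → ℝ) (hφ : Continuous φ)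
    (hequiv : ∀ k x, φ (k • x) = fun h => φ x (k⁻¹ * h)) (hq : ∀ x, φ x ∈ MapQ _ ℝ q) :
    secat (Quotient.mk (orbitRel (Multiplicative (ZMod p)) X)) ≤ (q - 1 : ℕ) := by
  have := Fact.mk hp
  refine secat_quotientMk_le (fun i : Fin (q - 1) => φ ⁻¹' centredTopLocus p (i + 1))
    (fun i => (isOpen_centredTopLocus _).preimage hφ) (fun i x hx y hy hxy => ?_) fun x => ?_
  · obtain ⟨k, rfl⟩ := orbitRel_apply.1 (Quotient.exact hxy)
    have hk := eq_one_of_mem_centredTopLocus hp (i : ℕ).succ_pos (by omega) hy (k := k⁻¹)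
      (by rwa [← hequiv])
    rw [inv_eq_one.1 hk]
    exact one_smul _ y
  · obtain ⟨A, hA, hA0, hAq⟩ := exists_isTopSet_of_mem_mapQ (hq x)
    obtain ⟨k, hk⟩ := exists_comp_mul_left_mem_centredTopLocus hp hA hA0 (by omega)
    refine ⟨⟨#A - 1, by omega⟩, k⁻¹, ?_⟩
    rw [Set.mem_preimage, hequiv, inv_inv, Nat.sub_add_cancel hA0]
    exact hk

theorem statement_9_general (p : ℕ) (hp : p.Prime) {q : ℕ} (hq2 : 2 ≤ q) (hqp : q ≤ p)
    {X : Type*} [TopologicalSpace X] [MulAction (Multiplicative (ZMod p)) X]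
    [ContinuousConstSMul (Multiplicative (ZMod p)) X]
    (hsecat : (q : ℕ∞) ≤ secat (Quotient.mk (MulAction.orbitRel (Multiplicative (ZMod p)) X))) :
    (¬ ∃ Φ : C(X, MapQ (Multiplicative (ZMod p)) ℝ q),
        ∀ (g : Multiplicative (ZMod p)) (x : X), Φ (g • x) = g • Φ x) ∧
    1 ≤ indexQ (Multiplicative (ZMod p)) X q := by
  have no_equivariant : ∀ φ : X → Multiplicative (ZMod p) → ℝ, Continuous φ →
      (∀ k x, φ (k • x) = fun h => φ x (k⁻¹ * h)) → (∀ x, φ x ∈ MapQ _ ℝ q) → False := by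
    intro φ hφ hequiv hq
    have : (q : ℕ∞) ≤ (q - 1 : ℕ) :=
      hsecat.trans (secat_quotientMk_le_of_equivariant hp hqp φ hφ hequiv hq)
    have : q ≤ q - 1 := by exact_mod_cast this
    omega
  refine ⟨fun ⟨Φ, hΦ⟩ => no_equivariant (fun x => Φ x) (by fun_prop)
    (fun k x => funext fun h => by rw [hΦ, MapQ.coe_smul]) fun x => (Φ x).2, ?_⟩
  refine le_iInf₂ fun k ⟨Φ, hΦ⟩ => ?_
  rcases k with _ | k
  · exact (no_equivariant (fun x g => (Φ x : _ → Fin 1 → ℝ) g 0)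
      (continuous_pi fun g => (continuous_apply 0).comp
        ((continuous_apply g).comp (continuous_subtype_val.comp Φ.continuous)))
      (fun k x => funext fun h => by rw [hΦ, MapQ.coe_smul])
      fun x => MapQ.comp_mem (Equiv.funUnique (Fin 1) ℝ).injective (Φ x).2).elim
  · exact_mod_cast k.succ_pos

/-- If `secat(X → X/ℤ_p) ≥ q` then there is no continuous `ℤ_p`-equivariant map
`X → Map_q(ℤ_p, ℝ)`; that is, `ind_q(X,ℤ_p) ≥ 1`. -/
theorem statement_9 (p : ℕ) (hp : p.Prime) {q : ℕ} (hq2 : 2 ≤ q) (hqp : q ≤ p)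
    {X : Type*} [TopologicalSpace X] [MulAction (Multiplicative (ZMod p)) X]
    [ContinuousConstSMul (Multiplicative (ZMod p)) X]
    (hfree : ∀ (g : Multiplicative (ZMod p)) (x : X), g • x = x → g = 1)
    (hsecat : (q : ℕ∞) ≤ secat (Quotient.mk (MulAction.orbitRel (Multiplicative (ZMod p)) X))) :
    (¬ ∃ Φ : C(X, MapQ (Multiplicative (ZMod p)) ℝ q),
        ∀ (g : Multiplicative (ZMod p)) (x : X), Φ (g • x) = g • Φ x) ∧
    1 ≤ indexQ (Multiplicative (ZMod p)) X q :=
  statement_9_general p hp hq2 hqp hsecat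
end
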